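/- Let d ≥ 2 be an integer, let 0 < γ < 3/2, and let V ≥ 0 be a real number. Define L^cl(s) := Γ(s+1)/(2^d·π^{d/2}·Γ(s + d/2 + 1)) for s ≥ 0, and ρ := (Γ(5/2)·Γ(γ+d/2+1)/(Γ((5+d)/2)·Γ(γ+1)))·3^{-3/2}·(3+d)^{(3+d)/2}·(2γ)^γ·(2γ+d)^{-γ-d/2}. Let ι be a countable index set and E : ι → ℝ a family of nonnegative real numbers such that for every λ > 0 one has ∑'_{j∈ι} ((λ - E_j)_+)^{3/2} ≤ L^cl(3/2)·V·λ^{3/2 + d/2}. Then for every λ > 0 one has ∑'_{j∈ι} ((λ - E_j)_+)^γ ≤ ρ·L^cl(γ)·V·λ^{γ + d/2}. -/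

import Mathlib

/-- The semiclassical constant `L^cl_{s,d} = Γ(s+1)/(2^d π^{d/2} Γ(s+d/2+1))`. -/
noncomputable def Lcl (d : ℕ) (s : ℝ) : ℝ :=
  Real.Gamma (s + 1) / (2 ^ d * Real.pi ^ ((d : ℝ) / 2) * Real.Gamma (s + (d : ℝ) / 2 + 1))

/-- The excess constant `ρ_{γ,d}` of Theorem 3.1 of the paper. -/
noncomputable def rhoConst (d : ℕ) (γ : ℝ) : ℝ :=
  (Real.Gamma (5 / 2) * Real.Gamma (γ + (d : ℝ) / 2 + 1) /
      (Real.Gamma ((5 + (d : ℝ)) / 2) * Real.Gamma (γ + 1))) *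
    3 ^ (-(3 / 2) : ℝ) * (3 + (d : ℝ)) ^ ((3 + (d : ℝ)) / 2) *
    (2 * γ) ^ γ * (2 * γ + (d : ℝ)) ^ (-γ - (d : ℝ) / 2)

/-! For `x = (λ - Eⱼ)₊ > 0` and any shift `μ > 0`, weighted AM–GM gives
`x ^ γ ≤ c(γ, p) μ ^ (γ - p) (x + μ) ^ p`, and there `x + μ = (λ + μ - Eⱼ)₊`. Summing over `j`
and applying the order-`p` bound at `λ + μ` bounds the order-`γ` Riesz mean by
`c μ ^ (γ - p) A (λ + μ) ^ (p + s)`; the optimal `μ` turns this into the constant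
`γ ^ γ p ^ (-p) (p + s) ^ (p + s) (γ + s) ^ (-γ - s)`. For `p = 3/2`, `s = d/2` this constant
times `L^cl(3/2)` equals `ρ L^cl(γ)`. -/

open Real

lemma rpow_mul_rpow_le_rpow_add {γ p x μ : ℝ} (hγ : 0 < γ) (hγp : γ < p)
    (hx : 0 ≤ x) (hμ : 0 ≤ μ) :
    x ^ γ * μ ^ (p - γ) ≤ (γ / p) ^ γ * ((p - γ) / p) ^ (p - γ) * (x + μ) ^ p := by
  have hp : 0 < p := hγ.trans hγp
  have hpγ : p - γ ≠ 0 := (sub_pos.2 hγp).ne'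
  have ha : 0 < γ / p := div_pos hγ hp
  have hb : 0 < (p - γ) / p := div_pos (sub_pos.2 hγp) hp
  have hxa : 0 ≤ x / (γ / p) := div_nonneg hx ha.le
  have hμb : 0 ≤ μ / ((p - γ) / p) := div_nonneg hμ hb.le
  have amgm : (x / (γ / p)) ^ (γ / p) * (μ / ((p - γ) / p)) ^ ((p - γ) / p) ≤ x + μ := by
    convert geom_mean_le_arith_mean2_weighted ha.le hb.le hxa hμb (by field_simp; ring) using 1
    field_simp
  have amgm_pow : (x / (γ / p)) ^ γ * (μ / ((p - γ) / p)) ^ (p - γ) ≤ (x + μ) ^ p := by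
    calc (x / (γ / p)) ^ γ * (μ / ((p - γ) / p)) ^ (p - γ)
        = ((x / (γ / p)) ^ (γ / p) * (μ / ((p - γ) / p)) ^ ((p - γ) / p)) ^ p := by
          rw [mul_rpow (by positivity) (by positivity), ← rpow_mul hxa, ← rpow_mul hμb]
          field_simp
      _ ≤ (x + μ) ^ p := rpow_le_rpow (by positivity) amgm hp.le
  rw [div_rpow hx ha.le, div_rpow hμ hb.le, div_mul_div_comm,
    div_le_iff₀ (by positivity)] at amgm_pow
  linarith

lemma max_sub_rpow_le {γ p μ : ℝ} (hγ : 0 < γ) (hγp : γ < p) (hμ : 0 < μ) (lam e : ℝ) :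
    max (lam - e) 0 ^ γ ≤
      (γ / p) ^ γ * ((p - γ) / p) ^ (p - γ) * μ ^ (γ - p) * max (lam + μ - e) 0 ^ p := by
  rcases le_or_gt (lam - e) 0 with hle | hpos
  · rw [max_eq_right hle, zero_rpow hγ.ne']
    have hp : 0 < p := hγ.trans hγp
    have : 0 < (p - γ) / p := div_pos (sub_pos.2 hγp) hp
    positivity
  · rw [max_eq_left hpos.le, max_eq_left (by linarith), add_sub_right_comm]
    have hμμ : μ ^ (p - γ) * μ ^ (γ - p) = 1 := by
      rw [← rpow_add hμ, sub_add_sub_cancel, sub_self, rpow_zero]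
    calc (lam - e) ^ γ = (lam - e) ^ γ * μ ^ (p - γ) * μ ^ (γ - p) := by
          rw [mul_assoc, hμμ, mul_one]
      _ ≤ (γ / p) ^ γ * ((p - γ) / p) ^ (p - γ) * (lam - e + μ) ^ p * μ ^ (γ - p) :=
          mul_le_mul_of_nonneg_right
            (rpow_mul_rpow_le_rpow_add hγ hγp hpos.le hμ.le) (rpow_nonneg hμ.le _)
      _ = _ := by ring

/-- `μ = (p - γ) λ / (γ + s)` minimises `μ ^ (γ - p) (λ + μ) ^ (p + s)`. -/
lemma optimal_shift_const {γ p s lam : ℝ} (hγ : 0 < γ) (hγp : γ < p) (hs : 0 < γ + s)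
    (hlam : 0 < lam) :
    (γ / p) ^ γ * ((p - γ) / p) ^ (p - γ) * ((p - γ) / (γ + s) * lam) ^ (γ - p) *
        (lam + (p - γ) / (γ + s) * lam) ^ (p + s) =
      γ ^ γ * p ^ (-p) * (p + s) ^ (p + s) * (γ + s) ^ (-γ - s) * lam ^ (γ + s) := by
  have hp : 0 < p := hγ.trans hγp
  have hpγ : 0 < p - γ := sub_pos.2 hγp
  have hps : 0 < p + s := by linarith
  have hshift : lam + (p - γ) / (γ + s) * lam = (p + s) / (γ + s) * lam := by
    field_simp
    ring
  rw [hshift, ← exp_log (by positivity : 0 < (γ / p) ^ γ * ((p - γ) / p) ^ (p - γ) *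
      ((p - γ) / (γ + s) * lam) ^ (γ - p) * ((p + s) / (γ + s) * lam) ^ (p + s)),
    ← exp_log (by positivity : 0 < γ ^ γ * p ^ (-p) * (p + s) ^ (p + s) *
      (γ + s) ^ (-γ - s) * lam ^ (γ + s))]
  congr 1
  simp (disch := positivity) only [log_mul, log_div, log_rpow]
  ring

noncomputable def rieszMean {ι : Type*} (E : ι → ℝ) (γ lam : ℝ) : ENNReal :=
  ∑' j, ENNReal.ofReal (max (lam - E j) 0 ^ γ)

theorem rieszMean_le_of_higher_order {ι : Type*} (E : ι → ℝ) {γ p s A : ℝ} (hγ : 0 < γ)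
    (hγp : γ < p) (hs : 0 < γ + s)
    (h : ∀ lam, 0 < lam → rieszMean E p lam ≤ ENNReal.ofReal (A * lam ^ (p + s)))
    {lam : ℝ} (hlam : 0 < lam) :
    rieszMean E γ lam ≤ ENNReal.ofReal
      (γ ^ γ * p ^ (-p) * (p + s) ^ (p + s) * (γ + s) ^ (-γ - s) * A * lam ^ (γ + s)) := by
  have hp : 0 < p := hγ.trans hγp
  have hpγ : 0 < p - γ := sub_pos.2 hγp
  set μ := (p - γ) / (γ + s) * lam
  have hμ : 0 < μ := by positivity
  set C := (γ / p) ^ γ * ((p - γ) / p) ^ (p - γ) * μ ^ (γ - p)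
  have hC : 0 ≤ C := by positivity
  calc rieszMean E γ lam
      ≤ ∑' j, ENNReal.ofReal (C * max (lam + μ - E j) 0 ^ p) :=
        ENNReal.tsum_le_tsum fun j ↦
          ENNReal.ofReal_le_ofReal (max_sub_rpow_le hγ hγp hμ lam (E j))
    _ = ENNReal.ofReal C * rieszMean E p (lam + μ) := by
        simp only [ENNReal.ofReal_mul hC, ENNReal.tsum_mul_left, rieszMean]
    _ ≤ ENNReal.ofReal C * ENNReal.ofReal (A * (lam + μ) ^ (p + s)) :=
        mul_le_mul_right (h _ (by positivity)) _
    _ = ENNReal.ofReal (C * (lam + μ) ^ (p + s) * A) := by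
        rw [← ENNReal.ofReal_mul hC]
        congr 1
        ring
    _ = _ := by
        rw [optimal_shift_const hγ hγp hs hlam]
        congr 1
        ring

lemma Lcl_three_halves {γ : ℝ} (hγ : -1 < γ) (d : ℕ) :
    Lcl d (3 / 2) = Real.Gamma (5 / 2) * Real.Gamma (γ + (d : ℝ) / 2 + 1) /
      (Real.Gamma ((5 + (d : ℝ)) / 2) * Real.Gamma (γ + 1)) * Lcl d γ := by
  have hd : (0 : ℝ) ≤ d := d.cast_nonneg
  have hΓγ : Real.Gamma (γ + 1) ≠ 0 := (Gamma_pos_of_pos (by linarith)).ne'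
  have hΓγd : Real.Gamma (γ + d / 2 + 1) ≠ 0 := (Gamma_pos_of_pos (by linarith)).ne'
  have hΓ5d : Real.Gamma ((5 + d) / 2) ≠ 0 := (Gamma_pos_of_pos (by positivity)).ne'
  have hπ : π ^ ((d : ℝ) / 2) ≠ 0 := (rpow_pos_of_pos pi_pos _).ne'
  rw [Lcl, Lcl, show (3 / 2 + 1 : ℝ) = 5 / 2 by norm_num,
    show (3 / 2 + d / 2 + 1 : ℝ) = (5 + d) / 2 by ring]
  generalize Real.Gamma (γ + d / 2 + 1) = a at hΓγd ⊢
  field_simp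

lemma rhoConst_mul_Lcl {γ : ℝ} (hγ : 0 < γ) (d : ℕ) :
    rhoConst d γ * Lcl d γ = γ ^ γ * (3 / 2) ^ (-(3 / 2) : ℝ) *
      (3 / 2 + (d : ℝ) / 2) ^ (3 / 2 + (d : ℝ) / 2) * (γ + (d : ℝ) / 2) ^ (-γ - (d : ℝ) / 2) *
      Lcl d (3 / 2) := by
  have hpow : γ ^ γ * (3 / 2) ^ (-(3 / 2) : ℝ) * ((3 + d) / 2) ^ ((3 + (d : ℝ)) / 2) *
      ((2 * γ + d) / 2) ^ (-γ - (d : ℝ) / 2) = 3 ^ (-(3 / 2) : ℝ) *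
      (3 + (d : ℝ)) ^ ((3 + (d : ℝ)) / 2) * (2 * γ) ^ γ * (2 * γ + (d : ℝ)) ^ (-γ - (d : ℝ) / 2) := by
    rw [← exp_log (by positivity : 0 < γ ^ γ * (3 / 2) ^ (-(3 / 2) : ℝ) *
        ((3 + d) / 2) ^ ((3 + (d : ℝ)) / 2) * ((2 * γ + d) / 2) ^ (-γ - (d : ℝ) / 2)),
      ← exp_log (by positivity : 0 < 3 ^ (-(3 / 2) : ℝ) * (3 + (d : ℝ)) ^ ((3 + (d : ℝ)) / 2) *
        (2 * γ) ^ γ * (2 * γ + (d : ℝ)) ^ (-γ - (d : ℝ) / 2))]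
    congr 1
    simp (disch := positivity) only [log_mul, log_div, log_rpow]
    ring
  rw [show (3 / 2 + d / 2 : ℝ) = (3 + d) / 2 by ring, show (γ + d / 2 : ℝ) = (2 * γ + d) / 2 by ring,
    hpow, Lcl_three_halves (γ := γ) (by linarith) d, rhoConst]
  ring

theorem stmt_11_general (d : ℕ) (γ V : ℝ) (hγ0 : 0 < γ) (hγ : γ < 3 / 2)
    {ι : Type*} (E : ι → ℝ)
    (h : ∀ lam : ℝ, 0 < lam →
      ∑' j, ENNReal.ofReal ((max (lam - E j) 0) ^ (3 / 2 : ℝ)) ≤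
        ENNReal.ofReal (Lcl d (3 / 2) * V * lam ^ (3 / 2 + (d : ℝ) / 2))) :
    ∀ lam : ℝ, 0 < lam →
      ∑' j, ENNReal.ofReal ((max (lam - E j) 0) ^ γ) ≤
        ENNReal.ofReal (rhoConst d γ * Lcl d γ * V * lam ^ (γ + (d : ℝ) / 2)) := by
  intro lam hlam
  rw [rhoConst_mul_Lcl hγ0, mul_assoc _ (Lcl d (3 / 2)) V]
  exact rieszMean_le_of_higher_order E (s := d / 2) hγ0 hγ (by positivity) h hlam

/-- eigenvalue form of Theorem 3.1: the order-3/2 semiclassical bound with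
constant `L^cl(3/2) V` implies the order-γ bound with constant `ρ_{γ,d} L^cl(γ) V` for
`0 < γ < 3/2`. -/
theorem stmt_11 (d : ℕ) (hd : 2 ≤ d) (γ V : ℝ) (hγ0 : 0 < γ) (hγ : γ < 3 / 2) (hV : 0 ≤ V)
    {ι : Type*} [Countable ι] (E : ι → ℝ) (hE : ∀ j, 0 ≤ E j)
    (h : ∀ lam : ℝ, 0 < lam →
      ∑' j, ENNReal.ofReal ((max (lam - E j) 0) ^ (3 / 2 : ℝ)) ≤
        ENNReal.ofReal (Lcl d (3 / 2) * V * lam ^ (3 / 2 + (d : ℝ) / 2))) :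
    ∀ lam : ℝ, 0 < lam →
      ∑' j, ENNReal.ofReal ((max (lam - E j) 0) ^ γ) ≤
        ENNReal.ofReal (rhoConst d γ * Lcl d γ * V * lam ^ (γ + (d : ℝ) / 2)) :=
  stmt_11_general d γ V hγ0 hγ E h
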